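/- arXiv:math/0101121 — 4 statements merged into one kernel-verified Lean document; each statement's English description precedes it below -/
import Mathlib

section
/- The map (g,a) ↦ g + ⟨q⟩ descends to a well-defined group homomorphism π: T(G,q) → G/⟨q⟩, where ⟨q⟩ is the subgroup of G generated by q. The homomorphism π sends torsion elements of T(G,q) to torsion elements of G/⟨q⟩, and if q has infinite order in G, then π restricts to an isomorphism from the torsion subgroup of T(G,q) onto the torsion subgroup of G/⟨q⟩. -/
/-- The Tate group `T(G,q) = (G × ℚ) ⧸ ⟨(q,1)⟩`. -/
abbrev TateGroup (G : Type*) [AddCommGroup G] (q : G) : Type _ :=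
  (G × ℚ) ⧸ AddSubgroup.zmultiples (q, (1 : ℚ))

/-- The class `[(g,a)]` of `(g,a) ∈ G × ℚ` in `T(G,q)`. -/
def TateGroup.mk {G : Type*} [AddCommGroup G] (q : G) (p : G × ℚ) : TateGroup G q :=
  QuotientAddGroup.mk p

/-- The homomorphism `π : T(G,q) → G/⟨q⟩` induced by `(g,a) ↦ g + ⟨q⟩`. -/
def tatePi (G : Type*) [AddCommGroup G] (q : G) :
    TateGroup G q →+ G ⧸ AddSubgroup.zmultiples q :=
  QuotientAddGroup.map _ _ (AddMonoidHom.fst G ℚ) (by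
    rintro ⟨g, a⟩ hga
    obtain ⟨n, hn⟩ := AddSubgroup.mem_zmultiples_iff.mp hga
    refine AddSubgroup.mem_comap.mpr (AddSubgroup.mem_zmultiples_iff.mpr ⟨n, ?_⟩)
    have := congrArg Prod.fst hn
    simpa using this)

theorem stmt3 (G : Type*) [AddCommGroup G] (q : G) :
    (∀ (g : G) (a : ℚ),
      tatePi G q (TateGroup.mk q (g, a)) =
        QuotientAddGroup.mk' (AddSubgroup.zmultiples q) g) ∧
    (∀ t : TateGroup G q, IsOfFinAddOrder t → IsOfFinAddOrder (tatePi G q t)) ∧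
    (¬ IsOfFinAddOrder q →
      Set.BijOn (tatePi G q) {t : TateGroup G q | IsOfFinAddOrder t}
        {x : G ⧸ AddSubgroup.zmultiples q | IsOfFinAddOrder x}) := by
  refine ⟨fun g a => rfl, fun t ht => (tatePi G q).isOfFinAddOrder ht, fun hq => ?_⟩
  refine ⟨fun t ht => (tatePi G q).isOfFinAddOrder ht, ?_, ?_⟩
  · -- injectivity on torsion
    have key : ∀ t : TateGroup G q, IsOfFinAddOrder t → tatePi G q t = 0 → t = 0 := by
      intro t ht h0
      induction t using QuotientAddGroup.induction_on with
      | H p =>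
        obtain ⟨g, a⟩ := p
        have hg : (g : G ⧸ AddSubgroup.zmultiples q) = 0 := h0
        rw [QuotientAddGroup.eq_zero_iff] at hg
        obtain ⟨m, hm⟩ := AddSubgroup.mem_zmultiples_iff.mp hg
        obtain ⟨n, hn0, hn⟩ := isOfFinAddOrder_iff_nsmul_eq_zero.mp ht
        rw [← QuotientAddGroup.mk_nsmul, QuotientAddGroup.eq_zero_iff] at hn
        obtain ⟨k, hk⟩ := AddSubgroup.mem_zmultiples_iff.mp hn
        have hk1 := congrArg Prod.fst hk
        have hk2 := congrArg Prod.snd hk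
        simp only [Prod.smul_fst, Prod.smul_snd, Prod.fst, Prod.snd] at hk1 hk2
        -- hk1 : k • q = n • g, hk2 : k • (1:ℚ) = n • a
        have hkq : k • q = (n * m) • q := by
          rw [hk1, ← hm, mul_smul, natCast_zsmul]
        have hkm : k = n * m := by
          by_contra hne
          apply hq
          refine isOfFinAddOrder_iff_zsmul_eq_zero.mpr ⟨k - n * m, sub_ne_zero.mpr hne, ?_⟩
          rw [sub_smul, hkq, sub_self]
        have ha : a = (m : ℚ) := by
          have h2 : (k : ℚ) = n * a := by simpa [nsmul_eq_mul] using hk2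
          rw [hkm] at h2
          push_cast at h2
          have hn0' : (n : ℚ) ≠ 0 := Nat.cast_ne_zero.mpr hn0.ne'
          exact (mul_left_cancel₀ hn0' h2).symm
        rw [QuotientAddGroup.eq_zero_iff]
        refine AddSubgroup.mem_zmultiples_iff.mpr ⟨m, ?_⟩
        rw [Prod.smul_mk, Prod.mk.injEq]
        exact ⟨hm, by rw [ha]; simp⟩
    intro s hs t ht hst
    obtain ⟨a, ha0, ha⟩ := isOfFinAddOrder_iff_nsmul_eq_zero.mp hs
    obtain ⟨b, hb0, hb⟩ := isOfFinAddOrder_iff_nsmul_eq_zero.mp ht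
    have hsub : IsOfFinAddOrder (s - t) := by
      refine isOfFinAddOrder_iff_nsmul_eq_zero.mpr ⟨a * b, Nat.mul_pos ha0 hb0, ?_⟩
      have h1 : (a * b) • s = 0 := by rw [mul_nsmul, ha, smul_zero]
      have h2 : (a * b) • t = 0 := by rw [mul_comm, mul_nsmul, hb, smul_zero]
      rw [nsmul_sub, h1, h2, sub_zero]
    have : s - t = 0 := key _ hsub (by rw [map_sub, hst, sub_self])
    exact sub_eq_zero.mp this
  · -- surjectivity onto torsion
    intro x hx
    induction x using QuotientAddGroup.induction_on with
    | H g =>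
      obtain ⟨n, hn0, hn⟩ := isOfFinAddOrder_iff_nsmul_eq_zero.mp hx
      rw [← QuotientAddGroup.mk_nsmul, QuotientAddGroup.eq_zero_iff] at hn
      obtain ⟨m, hm⟩ := AddSubgroup.mem_zmultiples_iff.mp hn
      refine ⟨TateGroup.mk q (g, (m : ℚ) / n), ?_, rfl⟩
      refine isOfFinAddOrder_iff_nsmul_eq_zero.mpr ⟨n, hn0, ?_⟩
      show ((n • (g, (m : ℚ) / n) : G × ℚ) : TateGroup G q) = 0
      rw [QuotientAddGroup.eq_zero_iff]
      refine AddSubgroup.mem_zmultiples_iff.mpr ⟨m, ?_⟩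
      rw [Prod.smul_mk, Prod.smul_mk, Prod.mk.injEq]
      constructor
      · simpa using hm
      · have hn0' : (n : ℚ) ≠ 0 := Nat.cast_ne_zero.mpr hn0.ne'
        simp [smul_eq_mul]
        field_simp
end

section
/- If q has infinite order in G, then there exists a group isomorphism T(G,q) ≅ (G/⟨q⟩) × ℚ that commutes with the maps to G/⟨q⟩, i.e., composing the isomorphism with the first projection (G/⟨q⟩) × ℚ → G/⟨q⟩ equals the homomorphism π: T(G,q) → G/⟨q⟩ induced by (g,a) ↦ g + ⟨q⟩. -/
theorem stmt4 (G : Type*) [AddCommGroup G] (q : G) (hq : ¬ IsOfFinAddOrder q) :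
    ∃ e : TateGroup G q ≃+ (G ⧸ AddSubgroup.zmultiples q) × ℚ,
      ∀ t : TateGroup G q, (e t).1 = tatePi G q t := by
  classical
  -- the inclusion ℚ →+ T(G,q), a ↦ [(0,a)]
  set i : ℚ →+ TateGroup G q :=
    (QuotientAddGroup.mk' _).comp (AddMonoidHom.inr G ℚ) with hi_def
  have hi : Function.Injective i := by
    rw [injective_iff_map_eq_zero]
    intro a ha
    have : ((0 : G), a) ∈ AddSubgroup.zmultiples ((q : G), (1 : ℚ)) := by
      simpa [hi_def, QuotientAddGroup.eq_zero_iff] using ha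
    obtain ⟨n, hn⟩ := AddSubgroup.mem_zmultiples_iff.mp this
    have h1 : n • q = 0 := congrArg Prod.fst hn
    have h2 : (n : ℚ) = a := by simpa using congrArg Prod.snd hn
    have hn0 : n = 0 := by
      by_contra h
      exact hq (isOfFinAddOrder_iff_zsmul_eq_zero.mpr ⟨n, h, h1⟩)
    rw [← h2, hn0]; simp
  -- extend id : ℚ → ℚ along i using injectivity of ℚ (divisible group)
  obtain ⟨r, hr⟩ := (Module.Baer.of_divisible ℚ).extension_property_addMonoidHom i hi
    (AddMonoidHom.id ℚ)
  have hri : ∀ a : ℚ, r (i a) = a := fun a => DFunLike.congr_fun hr a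
  -- facts about tatePi on the image of i and on mk (g, a)
  have hpi_mk : ∀ ga : G × ℚ, tatePi G q (QuotientAddGroup.mk ga) =
      QuotientAddGroup.mk ga.1 := fun ga => rfl
  have hpi_i : ∀ a : ℚ, tatePi G q (i a) = 0 := by
    intro a
    simp [hi_def, hpi_mk]
  set f : TateGroup G q →+ (G ⧸ AddSubgroup.zmultiples q) × ℚ := (tatePi G q).prod r with hf_def
  have hbij : Function.Bijective f := by
    constructor
    · rw [injective_iff_map_eq_zero]
      intro t ht
      obtain ⟨⟨g, a⟩, rfl⟩ := QuotientAddGroup.mk_surjective t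
      have h1 : tatePi G q (QuotientAddGroup.mk (g, a)) = 0 := congrArg Prod.fst ht
      have h2 : r (QuotientAddGroup.mk (g, a)) = 0 := congrArg Prod.snd ht
      rw [hpi_mk] at h1
      have : g ∈ AddSubgroup.zmultiples q := by
        simpa [QuotientAddGroup.eq_zero_iff] using h1
      obtain ⟨n, hn⟩ := AddSubgroup.mem_zmultiples_iff.mp this
      -- mk (g,a) = mk (g,a) - n • mk (q,1) = mk (0, a - n) = i (a - n)
      have key : (QuotientAddGroup.mk (g, a) : TateGroup G q) = i (a - n) := by
        have : ((g, a) - ((0 : G), a - (n : ℚ))) ∈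
            AddSubgroup.zmultiples ((q : G), (1 : ℚ)) := by
          refine AddSubgroup.mem_zmultiples_iff.mpr ⟨n, ?_⟩
          refine Prod.ext ?_ ?_
          · simpa using hn
          · simp
        have := (QuotientAddGroup.eq_iff_sub_mem).mpr this
        simpa [hi_def] using this
      rw [key] at h2 ⊢
      rw [hri] at h2
      rw [h2]; simp
    · rintro ⟨gbar, b⟩
      obtain ⟨g, rfl⟩ := QuotientAddGroup.mk_surjective gbar
      refine ⟨QuotientAddGroup.mk (g, 0) + i (b - r (QuotientAddGroup.mk (g, 0))), ?_⟩
      refine Prod.ext ?_ ?_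
      · simp only [hf_def, AddMonoidHom.prod_apply, map_add, hpi_i, hpi_mk, add_zero]
        simp
      · simp [hf_def, hri]
  refine ⟨AddEquiv.ofBijective f hbij, fun t => rfl⟩
end

section
/- Let p be a prime and N a natural number. Let E be an abelian group and f: E → ℚ a surjective additive homomorphism such that every element x of the kernel of f satisfies p^N • x = 0. Then f splits: there exists an additive homomorphism s: ℚ → E with f ∘ s = id on ℚ. -/
theorem stmt7 (p : ℕ) (hp : p.Prime) (N : ℕ) (E : Type*) [AddCommGroup E]
    (f : E →+ ℚ) (hf : Function.Surjective f)
    (hker : ∀ x ∈ f.ker, p ^ N • x = 0) :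
    ∃ s : ℚ →+ E, f.comp s = AddMonoidHom.id ℚ := by
  have hp0 : ((p : ℚ)) ^ N ≠ 0 := by
    have := hp.pos
    positivity
  have key : ∀ e e' : E, f e = f e' → p ^ N • e = p ^ N • e' := by
    intro e e' h
    have hm : e - e' ∈ f.ker := by simp [AddMonoidHom.mem_ker, h]
    have := hker _ hm
    rw [smul_sub, sub_eq_zero] at this
    exact this
  let g : ℚ → E := fun q => p ^ N • Function.surjInv hf (q / (p : ℚ) ^ N)
  have hg : ∀ q, f (g q) = q := by
    intro q
    have : f (Function.surjInv hf (q / (p : ℚ) ^ N)) = q / (p : ℚ) ^ N :=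
      Function.surjInv_eq hf _
    simp only [g, map_nsmul, this, nsmul_eq_mul]
    push_cast
    field_simp
  refine ⟨AddMonoidHom.mk' g ?_, ?_⟩
  · intro a b
    have h := key (Function.surjInv hf ((a + b) / (p : ℚ) ^ N))
      (Function.surjInv hf (a / (p : ℚ) ^ N) + Function.surjInv hf (b / (p : ℚ) ^ N)) ?_
    · simpa [g, smul_add] using h
    · simp [Function.surjInv_eq hf, add_div]
  · ext q
    simpa using hg q
end

section
/- For complex numbers q and L with 0 < |q| < 1 and L ≠ 0, the Weierstrass sigma product satisfies the functional equation σ(qL, q) = −L^{-1} · σ(L, q). -/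
/-! With the infinite q-Pochhammer symbol `(c; q)_∞ = ∏_{k ≥ 0} (1 - c q^k)`, the sigma product is
`σ(L, q) = (L; q)_∞ (q/L; q)_∞ / (q; q)_∞²`. Peeling off the first factor,
`(c; q)_∞ = (1 - c) (cq; q)_∞`, at `c = L` and `c = L⁻¹` turns `σ(qL, q)` into `σ(L, q)` up to the
factor `(1 - L⁻¹) / (1 - L) = -L⁻¹`. -/

/-- The Weierstrass sigma product
`σ(L,q) = (1 − L) · ∏_{k≥1} (1 − q^k L)(1 − q^k L⁻¹)/(1 − q^k)²`. -/
noncomputable def weierstrassSigma (L q : ℂ) : ℂ :=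
  (1 - L) * ∏' k : ℕ,
    ((1 - q ^ (k + 1) * L) * (1 - q ^ (k + 1) * L⁻¹)) / (1 - q ^ (k + 1)) ^ 2

noncomputable def qPochhammer (c q : ℂ) : ℂ :=
  ∏' k : ℕ, (1 - c * q ^ k)

section qPochhammer

variable {q : ℂ}

lemma summable_norm_mul_pow (hq : ‖q‖ < 1) (c : ℂ) : Summable fun k : ℕ => ‖c * q ^ k‖ :=
  ((summable_norm_geometric_of_norm_lt_one hq).mul_left ‖c‖).congr fun _ => (norm_mul _ _).symm

lemma multipliable_one_sub_mul_pow (hq : ‖q‖ < 1) (c : ℂ) :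
    Multipliable fun k : ℕ => 1 - c * q ^ k := by
  simpa only [sub_eq_add_neg] using
    multipliable_one_add_of_summable (by simpa only [norm_neg] using summable_norm_mul_pow hq c)

lemma qPochhammer_eq_one_sub_mul (hq : ‖q‖ < 1) (c : ℂ) :
    qPochhammer c q = (1 - c) * qPochhammer (c * q) q := by
  have hshift : ∀ k : ℕ, 1 - c * q ^ (k + 1) = 1 - c * q * q ^ k := fun k => by ring
  unfold qPochhammer
  rw [tprod_eq_zero_mul' ((multipliable_one_sub_mul_pow hq (c * q)).congr fun k => (hshift k).symm),
    pow_zero, mul_one, tprod_congr hshift]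

lemma qPochhammer_ne_zero (hq : ‖q‖ < 1) {c : ℂ} (hc : ∀ k : ℕ, c * q ^ k ≠ 1) :
    qPochhammer c q ≠ 0 := by
  simpa only [qPochhammer, sub_eq_add_neg] using
    tprod_one_add_ne_zero_of_summable (f := fun k : ℕ => -(c * q ^ k))
      (fun k h => hc k (by linear_combination -h))
      (by simpa only [norm_neg] using summable_norm_mul_pow hq c)

lemma qPochhammer_self_ne_zero (hq : ‖q‖ < 1) : qPochhammer q q ≠ 0 := by
  refine qPochhammer_ne_zero hq fun k h => ?_
  have : ‖q ^ (k + 1)‖ < 1 := by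
    rw [norm_pow]; exact pow_lt_one₀ (norm_nonneg q) hq k.succ_ne_zero
  rw [pow_succ', h, norm_one] at this
  exact lt_irrefl _ this

end qPochhammer

lemma weierstrassSigma_eq_qPochhammer {q : ℂ} (hq : ‖q‖ < 1) (L : ℂ) :
    weierstrassSigma L q = qPochhammer L q * qPochhammer (q * L⁻¹) q / qPochhammer q q ^ 2 := by
  have hmul (c : ℂ) : Multipliable fun k : ℕ => 1 - q ^ (k + 1) * c :=
    (multipliable_one_sub_mul_pow hq (q * c)).congr fun k => by ring
  have hprod (c : ℂ) : ∏' k : ℕ, (1 - q ^ (k + 1) * c) = qPochhammer (q * c) q :=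
    tprod_congr fun k => by ring
  have hmul₁ : Multipliable fun k : ℕ => 1 - q ^ (k + 1) := by simpa using hmul 1
  have hprod₁ : ∏' k : ℕ, (1 - q ^ (k + 1)) = qPochhammer q q := by simpa using hprod 1
  have hden : ∏' k : ℕ, (1 - q ^ (k + 1)) ^ 2 = qPochhammer q q ^ 2 := by
    rw [hmul₁.tprod_pow, hprod₁]
  rw [weierstrassSigma, qPochhammer_eq_one_sub_mul hq L, mul_assoc, mul_div_assoc,
    ((hmul L).mul (hmul L⁻¹)).tprod_div₀ (hmul₁.pow 2)
      (hden ▸ pow_ne_zero 2 (qPochhammer_self_ne_zero hq)),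
    (hmul L).tprod_mul (hmul L⁻¹), hden, hprod, hprod, mul_comm L q]

theorem stmt11 (q L : ℂ) (hq0 : 0 < ‖q‖) (hq1 : ‖q‖ < 1)
    (hL : L ≠ 0) :
    weierstrassSigma (q * L) q = -L⁻¹ * weierstrassSigma L q := by
  have hq : q ≠ 0 := norm_pos_iff.mp hq0
  rw [weierstrassSigma_eq_qPochhammer hq1, weierstrassSigma_eq_qPochhammer hq1,
    qPochhammer_eq_one_sub_mul hq1 L, mul_inv, mul_inv_cancel_left₀ hq,
    qPochhammer_eq_one_sub_mul hq1 L⁻¹, mul_comm L, mul_comm L⁻¹ q]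
  field_simp
  ring
end
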